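/- Let T be the subgroup of the symmetric group on {0,...,11} generated by a = (0,7,11)(1,5,6)(2,9,10)(3,4,8) and b = (0,4,2)(1,5,9)(3,7,11)(6,10,8), let c = (ab)^{-1}, and let V be the subgroup { id, (1,7)(4,10), (0,6)(3,9), (0,6)(1,7)(3,9)(4,10), (0,3,6,9)(1,10)(2,8)(4,7), (0,3,6,9)(1,4)(2,8)(7,10), (0,9,6,3)(1,10)(2,8)(4,7), (0,9,6,3)(1,4)(2,8)(7,10) }. Then for every r with 1 ≤ r ≤ 2 no element of V is conjugate in T to a^r or to b^r, and for every r with 1 ≤ r ≤ 5 no element of V is conjugate in T to c^r. -/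

import Mathlib

/-!
Every element of `V` fixes the point `5`, while `aʳ`, `bʳ` (`r ≤ 2`) and `cʳ` (`r ≤ 5`) move every
point: `a` and `b` are products of four disjoint `3`-cycles and `c` of two disjoint `6`-cycles.
Being fixed-point-free is invariant under conjugation, in `T` or anywhere else.
-/

/-- `a = (0,7,11)(1,5,6)(2,9,10)(3,4,8)` as a permutation of `{0,…,11}`. -/
def a : Equiv.Perm (Fin 12) := c[0, 7, 11] * c[1, 5, 6] * c[2, 9, 10] * c[3, 4, 8]

/-- `b = (0,4,2)(1,5,9)(3,7,11)(6,10,8)` as a permutation of `{0,…,11}`. -/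
def b : Equiv.Perm (Fin 12) := c[0, 4, 2] * c[1, 5, 9] * c[3, 7, 11] * c[6, 10, 8]

/-- `T` is the subgroup of the symmetric group on 12 letters generated by `a` and `b`. -/
def T : Subgroup (Equiv.Perm (Fin 12)) := Subgroup.closure {a, b}

/-- The set `V` of eight permutations. -/
def Vset : Set (Equiv.Perm (Fin 12)) :=
  {1, c[1,7] * c[4,10], c[0,6] * c[3,9], c[0,6] * c[1,7] * c[3,9] * c[4,10],
   c[0,3,6,9] * c[1,10] * c[2,8] * c[4,7], c[0,3,6,9] * c[1,4] * c[2,8] * c[7,10],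
   c[0,9,6,3] * c[1,10] * c[2,8] * c[4,7], c[0,9,6,3] * c[1,4] * c[2,8] * c[7,10]}

/-- `c = (ab)⁻¹`. -/
def cp : Equiv.Perm (Fin 12) := (a * b)⁻¹

section Derangements

variable {α : Type*}

theorem conj_mem_derangements {g : Equiv.Perm α} (hg : g ∈ derangements α) (t : Equiv.Perm α) :
    t * g * t⁻¹ ∈ derangements α := by
  intro x hx
  apply hg (t⁻¹ x)
  rw [Equiv.Perm.mul_apply, Equiv.Perm.mul_apply] at hx
  exact Equiv.Perm.eq_inv_iff_eq.mpr hx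

theorem not_exists_conj_eq_of_mem_derangements {g v : Equiv.Perm α} (hg : g ∈ derangements α)
    {x : α} (hv : v x = x) : ¬ ∃ t, t * g * t⁻¹ = v := by
  rintro ⟨t, rfl⟩
  exact conj_mem_derangements hg t x hv

end Derangements

theorem apply_five_of_mem_Vset {v : Equiv.Perm (Fin 12)} (hv : v ∈ Vset) : v 5 = 5 := by
  rcases hv with rfl | rfl | rfl | rfl | rfl | rfl | rfl | rfl <;> decide

theorem a_pow_mem_derangements {r : ℕ} (h1 : 1 ≤ r) (h2 : r ≤ 2) :
    a ^ r ∈ derangements (Fin 12) := by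
  interval_cases r <;> decide

theorem b_pow_mem_derangements {r : ℕ} (h1 : 1 ≤ r) (h2 : r ≤ 2) :
    b ^ r ∈ derangements (Fin 12) := by
  interval_cases r <;> decide

theorem cp_eq : cp = c[0, 7, 2, 6, 1, 8] * c[3, 10, 5, 9, 4, 11] := by
  rw [cp, inv_eq_iff_eq_inv]
  decide

theorem cp_pow_mem_derangements {r : ℕ} (h1 : 1 ≤ r) (h2 : r ≤ 5) :
    cp ^ r ∈ derangements (Fin 12) := by
  rw [cp_eq]
  interval_cases r <;> decide

/-- No element of `V` is conjugate in `T` to `aʳ` or `bʳ` for `1 ≤ r ≤ 2`, nor to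
`cʳ` for `1 ≤ r ≤ 5`, where `c = (ab)⁻¹`. -/
theorem stmt_7 :
    (∀ r : ℕ, 1 ≤ r → r ≤ 2 → ∀ v ∈ Vset,
      (¬ ∃ t ∈ T, t * a ^ r * t⁻¹ = v) ∧ (¬ ∃ t ∈ T, t * b ^ r * t⁻¹ = v)) ∧
    (∀ r : ℕ, 1 ≤ r → r ≤ 5 → ∀ v ∈ Vset, ¬ ∃ t ∈ T, t * cp ^ r * t⁻¹ = v) := by
  have forget_T {g v : Equiv.Perm (Fin 12)} (h : ¬ ∃ t, t * g * t⁻¹ = v) :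
      ¬ ∃ t ∈ T, t * g * t⁻¹ = v :=
    fun ⟨t, _, ht⟩ => h ⟨t, ht⟩
  refine ⟨fun r h1 h2 v hv => ⟨?_, ?_⟩, fun r h1 h2 v hv => ?_⟩ <;> apply forget_T
  · exact not_exists_conj_eq_of_mem_derangements (a_pow_mem_derangements h1 h2)
      (apply_five_of_mem_Vset hv)
  · exact not_exists_conj_eq_of_mem_derangements (b_pow_mem_derangements h1 h2)
      (apply_five_of_mem_Vset hv)
  · exact not_exists_conj_eq_of_mem_derangements (cp_pow_mem_derangements h1 h2)
      (apply_five_of_mem_Vset hv)
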